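/- arXiv:2206.06484 — 3 statements merged into one kernel-verified Lean document; each statement's English description precedes it below -/
import Mathlib

section
/- For any measurable m : Ω → [0,1] and v ∈ [0,1], every segmentation s in the class S_{m,v} (segmentations of volume v that vanish λ-a.e. where m < 1 - F_m⁻¹(v) and equal 1 λ-a.e. where m > 1 - F_m⁻¹(v)) attains the supremum of ∫ s·m dλ over all segmentations of volume v, and conversely every maximizer of volume v lies in S_{m,v}. -/
open MeasureTheory Set

noncomputable section

/-- Normalized Lebesgue measure on the unit cube `[0,1]^n`. -/
def cubeMeasure (n : ℕ) : Measure (Fin n → ℝ) :=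
  volume.restrict (Set.univ.pi fun _ => Set.Icc (0:ℝ) 1)

/-- A segmentation: a measurable `{0,1}`-valued function on the cube. -/
def IsSeg {n : ℕ} (s : (Fin n → ℝ) → ℝ) : Prop :=
  Measurable s ∧ ∀ ω, s ω = 0 ∨ s ω = 1

/-- A marginal function: a measurable `[0,1]`-valued function on the cube. -/
def IsMarg {n : ℕ} (m : (Fin n → ℝ) → ℝ) : Prop :=
  Measurable m ∧ ∀ ω, m ω ∈ Set.Icc (0:ℝ) 1

/-- The volume `‖f‖₁ = ∫ f dλ` (for nonnegative `f`). -/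
def vol {n : ℕ} (f : (Fin n → ℝ) → ℝ) : ℝ := ∫ ω, f ω ∂(cubeMeasure n)

/-- `F_m(t) = λ({ω : 1 - m(ω) ≤ t})`. -/
def Fcdf {n : ℕ} (m : (Fin n → ℝ) → ℝ) (t : ℝ) : ℝ :=
  ((cubeMeasure n) {ω | 1 - m ω ≤ t}).toReal

/-- The left limit `F_m(t-) = λ({ω : 1 - m(ω) < t})`. -/
def FcdfMinus {n : ℕ} (m : (Fin n → ℝ) → ℝ) (t : ℝ) : ℝ :=
  ((cubeMeasure n) {ω | 1 - m ω < t}).toReal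

/-- The generalized inverse (quantile function) `F_m⁻¹(v) = inf{t ∈ [0,1] : F_m(t) ≥ v}`. -/
def Finv {n : ℕ} (m : (Fin n → ℝ) → ℝ) (v : ℝ) : ℝ :=
  sInf {t | t ∈ Set.Icc (0:ℝ) 1 ∧ v ≤ Fcdf m t}

/-- The class `S_{m,v}`. -/
def Smv {n : ℕ} (m : (Fin n → ℝ) → ℝ) (v : ℝ) (s : (Fin n → ℝ) → ℝ) : Prop :=
  IsSeg s ∧ vol s = v ∧
    (∫ ω in {ω | m ω < 1 - Finv m v}, s ω ∂(cubeMeasure n)) = 0 ∧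
    (∫ ω in {ω | m ω > 1 - Finv m v}, (1 - s ω) ∂(cubeMeasure n)) = 0

/-
Bathtub principle. Put `c = 1 - F_m⁻¹(v)`. For segmentations `s, s'` of the same volume,
`∫ s m - ∫ s' m = ∫ (s - s') (m - c)`, and the integrand is a.e. nonnegative as soon as `s`
vanishes a.e. on `{m < c}` and equals `1` a.e. on `{m > c}`, i.e. `s ∈ S_{m,v}`; hence every
element of `S_{m,v}` is a maximizer. Conversely, the quantile inequalities
`λ(m > c) ≤ v ≤ λ(m ≥ c)` and the absence of atoms give some `s₀ ∈ S_{m,v}`; for a maximizer `s`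
the nonnegative function `(s₀ - s) (m - c)` then has integral `0`, so `s = s₀` a.e. off `{m = c}`.
-/

open Filter ProbabilityTheory

lemma StieltjesFunction.le_apply_csInf (f : StieltjesFunction ℝ) {v : ℝ} {T : Set ℝ}
    (hT : T.Nonempty) (hv : ∀ t ∈ T, v ≤ f t) : v ≤ f (sInf T) := by
  refine ge_of_tendsto ((f.right_continuous _).mono_left
    (nhdsWithin_mono _ Ioi_subset_Ici_self)) (eventually_nhdsWithin_of_forall fun x hx => ?_)
  obtain ⟨t, htT, htx⟩ := exists_lt_of_csInf_lt hT hx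
  exact (hv t htT).trans (f.mono htx.le)

lemma ProbabilityTheory.measureReal_Iio_le_of_cdf_le {ν : Measure ℝ} [IsProbabilityMeasure ν]
    {x v : ℝ} (hv : ∀ t < x, cdf ν t ≤ v) : ν.real (Iio x) ≤ v := by
  have hleftLim : Function.leftLim (cdf ν) x ≤ v :=
    le_of_tendsto ((monotone_cdf ν).tendsto_leftLim x)
      (eventually_nhdsWithin_of_forall fun t ht => hv t ht)
  have h := (cdf ν).measure_Iio (tendsto_cdf_atBot ν) x
  rw [measure_cdf, sub_zero] at h
  rw [measureReal_def, h, ENNReal.toReal_ofReal']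
  exact max_le hleftLim ((cdf_nonneg ν (x - 1)).trans (hv _ (sub_one_lt x)))

lemma setIntegral_eq_zero_iff_ae_imp {α : Type*} [MeasurableSpace α] {μ : Measure α}
    {f : α → ℝ} {A : Set α} (hA : MeasurableSet A) (hf : ∀ x, 0 ≤ f x) (hfi : Integrable f μ) :
    ∫ x in A, f x ∂μ = 0 ↔ ∀ᵐ x ∂μ, x ∈ A → f x = 0 := by
  rw [setIntegral_eq_zero_iff_of_nonneg_ae (Eventually.of_forall hf) hfi.integrableOn,
    EventuallyEq, ae_restrict_iff' hA]
  rfl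

lemma integrable_of_mem_Icc {α : Type*} [MeasurableSpace α] {μ : Measure α} [IsFiniteMeasure μ]
    {f : α → ℝ} (hf : Measurable f) (hf01 : ∀ x, f x ∈ Icc (0:ℝ) 1) : Integrable f μ :=
  (integrable_const (1:ℝ)).mono' hf.aestronglyMeasurable (Eventually.of_forall fun x => by
    rw [Real.norm_of_nonneg (hf01 x).1]; exact (hf01 x).2)

instance isProbabilityMeasure_cubeMeasure (n : ℕ) : IsProbabilityMeasure (cubeMeasure n) := by
  constructor
  rw [cubeMeasure, Measure.restrict_apply_univ, volume_pi_pi]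
  simp [Real.volume_Icc]

section Cube

variable {n : ℕ}

lemma cubeMeasure_eval_preimage (i : Fin n) {A : Set ℝ} (hA : MeasurableSet A) :
    cubeMeasure n (Function.eval i ⁻¹' A) = volume (A ∩ Icc 0 1) := by
  have : IsProbabilityMeasure (volume.restrict (Icc (0:ℝ) 1)) := ⟨by simp⟩
  rw [cubeMeasure, volume_pi, Measure.restrict_pi_pi,
    ← Measure.map_apply (measurable_pi_apply i) hA, (measurePreserving_eval _ i).map_eq,
    Measure.restrict_apply hA]

lemma measureReal_le_of_subset_union_eval_preimage (i : Fin n) {A : Set ℝ}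
    (hA : MeasurableSet A) (hA01 : Disjoint A (Icc 0 1)) {U V : Set (Fin n → ℝ)}
    (hUV : U ⊆ V ∪ Function.eval i ⁻¹' A) : (cubeMeasure n).real U ≤ (cubeMeasure n).real V :=
  calc (cubeMeasure n).real U
      ≤ (cubeMeasure n).real V + (cubeMeasure n).real (Function.eval i ⁻¹' A) :=
        (measureReal_mono hUV).trans (measureReal_union_le _ _)
    _ = (cubeMeasure n).real V := by
        rw [add_eq_left, measureReal_def, cubeMeasure_eval_preimage i hA, hA01.inter_eq,
          measure_empty, ENNReal.toReal_zero]

lemma measureReal_cube_eval_preimage_Ioc_le (i : Fin n) (x y : ℝ) :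
    (cubeMeasure n).real (Function.eval i ⁻¹' Ioc y x) ≤ dist x y := by
  rw [measureReal_def, cubeMeasure_eval_preimage i measurableSet_Ioc, ← measureReal_def]
  calc volume.real (Ioc y x ∩ Icc 0 1) ≤ volume.real (Ioc y x) :=
        measureReal_mono inter_subset_left measure_Ioc_lt_top.ne
    _ = max (x - y) 0 := Real.volume_real_Ioc
    _ ≤ dist x y := max_le (le_abs_self _) dist_nonneg

lemma lipschitzWith_measureReal_union_inter_eval_le (i : Fin n) (S T : Set (Fin n → ℝ)) :
    LipschitzWith 1 fun t => (cubeMeasure n).real (S ∪ T ∩ Function.eval i ⁻¹' Iic t) := by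
  refine LipschitzWith.of_le_add fun x y => ?_
  calc (cubeMeasure n).real (S ∪ T ∩ Function.eval i ⁻¹' Iic x)
      ≤ (cubeMeasure n).real
          ((S ∪ T ∩ Function.eval i ⁻¹' Iic y) ∪ Function.eval i ⁻¹' Ioc y x) := by
        refine measureReal_mono fun ω hω => ?_
        rcases hω with hω | ⟨hωT, hωx⟩
        · exact Or.inl (Or.inl hω)
        · rcases le_or_gt (ω i) y with hωy | hωy
          · exact Or.inl (Or.inr ⟨hωT, hωy⟩)
          · exact Or.inr ⟨hωy, hωx⟩
    _ ≤ (cubeMeasure n).real (S ∪ T ∩ Function.eval i ⁻¹' Iic y) + dist x y :=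
        (measureReal_union_le _ _).trans
          (by gcongr; exact measureReal_cube_eval_preimage_Ioc_le i x y)

/-- For `n = 0` the cube is a point, so only the measures `0` and `1` occur; otherwise
`t ↦ λ(S ∪ T ∩ {ω | ω 0 ≤ t})` is continuous and the intermediate value theorem applies. -/
lemma exists_measurableSet_between_measureReal_eq {S T E : Set (Fin n → ℝ)}
    (hS : MeasurableSet S) (hT : MeasurableSet T) (hST : S ⊆ T)
    (hSE : (cubeMeasure n).real S ≤ (cubeMeasure n).real E)
    (hET : (cubeMeasure n).real E ≤ (cubeMeasure n).real T) :
    ∃ B, MeasurableSet B ∧ S ⊆ B ∧ B ⊆ T ∧ (cubeMeasure n).real B = (cubeMeasure n).real E := by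
  rcases Nat.eq_zero_or_pos n with rfl | hn
  · rcases E.eq_empty_or_nonempty with rfl | hE
    · exact ⟨S, hS, subset_rfl, hST, le_antisymm hSE (by simp)⟩
    · rw [hE.eq_univ, probReal_univ] at hET ⊢
      exact ⟨T, hT, hST, subset_rfl, le_antisymm measureReal_le_one hET⟩
  set i : Fin n := ⟨0, hn⟩
  set B : ℝ → Set (Fin n → ℝ) := fun t => S ∪ T ∩ Function.eval i ⁻¹' Iic t
  have hB_neg_one : (cubeMeasure n).real (B (-1)) = (cubeMeasure n).real S :=
    le_antisymm (measureReal_le_of_subset_union_eval_preimage i measurableSet_Iic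
        (disjoint_left.mpr fun x hx hx' => by linarith [mem_Iic.mp hx, hx'.1])
        (union_subset_union_right _ inter_subset_right))
      (measureReal_mono subset_union_left)
  have hB_one : (cubeMeasure n).real (B 1) = (cubeMeasure n).real T :=
    le_antisymm (measureReal_mono (union_subset hST inter_subset_left))
      (measureReal_le_of_subset_union_eval_preimage i measurableSet_Ioi
        (disjoint_left.mpr fun x hx hx' => by linarith [mem_Ioi.mp hx, hx'.2])
        fun ω hω => (le_or_gt (ω i) 1).imp (fun hω1 => Or.inr ⟨hω, hω1⟩) id)
  obtain ⟨t, -, ht⟩ := intermediate_value_Icc (by norm_num : (-1:ℝ) ≤ 1)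
    (lipschitzWith_measureReal_union_inter_eval_le i S T).continuous.continuousOn
    (show (cubeMeasure n).real E ∈ Icc _ _ by rw [hB_neg_one, hB_one]; exact ⟨hSE, hET⟩)
  exact ⟨B t, hS.union (hT.inter (measurable_pi_apply i measurableSet_Iic)), subset_union_left,
    union_subset hST inter_subset_left, ht⟩

end Cube

section Quantile

variable {n : ℕ} {m : (Fin n → ℝ) → ℝ} {v : ℝ}

lemma Fcdf_eq_cdf (hm : Measurable m) :
    Fcdf m = cdf ((cubeMeasure n).map fun ω => 1 - m ω) := by
  have hm' : Measurable fun ω => 1 - m ω := measurable_const.sub hm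
  have := Measure.isProbabilityMeasure_map hm'.aemeasurable (μ := cubeMeasure n)
  ext t
  rw [cdf_eq_real, map_measureReal_apply hm' measurableSet_Iic]
  rfl

lemma Fcdf_one (hm : IsMarg m) : Fcdf m 1 = 1 := by
  have : {ω : Fin n → ℝ | 1 - m ω ≤ 1} = univ :=
    eq_univ_of_forall fun ω => by simp [(hm.2 ω).1]
  rw [Fcdf, this, measure_univ, ENNReal.toReal_one]

lemma Fcdf_of_neg (hm : IsMarg m) {t : ℝ} (ht : t < 0) : Fcdf m t = 0 := by
  have : {ω : Fin n → ℝ | 1 - m ω ≤ t} = ∅ :=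
    eq_empty_of_forall_notMem fun ω hω => by linarith [(hm.2 ω).2, mem_ofPred_eq.mp hω]
  rw [Fcdf, this, measure_empty, ENNReal.toReal_zero]

lemma one_mem_Finv_set (hm : IsMarg m) (hv : v ≤ 1) :
    (1 : ℝ) ∈ {t | t ∈ Icc (0:ℝ) 1 ∧ v ≤ Fcdf m t} :=
  ⟨⟨zero_le_one, le_rfl⟩, (Fcdf_one hm).symm ▸ hv⟩

lemma Finv_le_one (hm : IsMarg m) (hv : v ≤ 1) : Finv m v ≤ 1 :=
  csInf_le ⟨0, fun _ ht => ht.1.1⟩ (one_mem_Finv_set hm hv)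

lemma le_Fcdf_Finv (hm : IsMarg m) (hv : v ≤ 1) : v ≤ Fcdf m (Finv m v) := by
  rw [Fcdf_eq_cdf hm.1]
  exact (cdf _).le_apply_csInf ⟨1, one_mem_Finv_set hm hv⟩
    fun t ht => Fcdf_eq_cdf hm.1 ▸ ht.2

lemma FcdfMinus_Finv_le (hm : IsMarg m) (hv : v ∈ Icc (0:ℝ) 1) :
    FcdfMinus m (Finv m v) ≤ v := by
  have hm' : Measurable fun ω => 1 - m ω := measurable_const.sub hm.1
  have := Measure.isProbabilityMeasure_map hm'.aemeasurable (μ := cubeMeasure n)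
  change (cubeMeasure n).real ((fun ω => 1 - m ω) ⁻¹' Iio (Finv m v)) ≤ v
  rw [← map_measureReal_apply hm' measurableSet_Iio]
  refine measureReal_Iio_le_of_cdf_le fun t ht => ?_
  rw [← Fcdf_eq_cdf hm.1]
  rcases lt_or_ge t 0 with ht0 | ht0
  · exact (Fcdf_of_neg hm ht0).symm ▸ hv.1
  · have hnotMem := notMem_of_lt_csInf ht ⟨0, fun _ ht => ht.1.1⟩
    exact le_of_not_ge fun hle =>
      hnotMem ⟨⟨ht0, ht.le.trans (Finv_le_one hm hv.2)⟩, hle⟩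

end Quantile

section Segmentation

variable {n : ℕ} {m s s' : (Fin n → ℝ) → ℝ} {c v : ℝ}

lemma IsSeg.mem_Icc (hs : IsSeg s) (ω : Fin n → ℝ) : s ω ∈ Icc (0:ℝ) 1 := by
  rcases hs.2 ω with h | h <;> simp [h]

lemma IsSeg.one_sub (hs : IsSeg s) : IsSeg fun ω => 1 - s ω :=
  ⟨measurable_const.sub hs.1, fun ω => by rcases hs.2 ω with h | h <;> simp [h]⟩

lemma IsSeg.integrable (hs : IsSeg s) : Integrable s (cubeMeasure n) :=
  integrable_of_mem_Icc hs.1 hs.mem_Icc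

lemma IsSeg.integrable_mul (hs : IsSeg s) (hm : IsMarg m) :
    Integrable (fun ω => s ω * m ω) (cubeMeasure n) :=
  integrable_of_mem_Icc (hs.1.mul hm.1) fun ω =>
    ⟨mul_nonneg (hs.mem_Icc ω).1 (hm.2 ω).1, mul_le_one₀ (hs.mem_Icc ω).2 (hm.2 ω).1 (hm.2 ω).2⟩

lemma IsSeg.measurableSet (hs : IsSeg s) : MeasurableSet {ω | s ω = 1} :=
  hs.1 (measurableSet_singleton 1)

lemma IsSeg.eq_indicator (hs : IsSeg s) : s = {ω | s ω = 1}.indicator 1 := by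
  ext ω
  rcases hs.2 ω with h | h <;> simp [h]

lemma IsSeg.vol_eq (hs : IsSeg s) : vol s = (cubeMeasure n).real {ω | s ω = 1} := by
  conv_lhs => rw [vol, hs.eq_indicator]
  exact integral_indicator_one hs.measurableSet

lemma IsSeg.integrable_sub_mul_sub (hs : IsSeg s) (hs' : IsSeg s') (hm : IsMarg m) (c : ℝ) :
    Integrable (fun ω => (s ω - s' ω) * (m ω - c)) (cubeMeasure n) :=
  ((integrable_of_mem_Icc hm.1 hm.2).sub (integrable_const c)).bdd_mul (c := 1)
    (hs.1.sub hs'.1).aestronglyMeasurable (Eventually.of_forall fun ω => by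
      rw [Real.norm_eq_abs, abs_sub_le_iff]
      obtain ⟨hs0, hs1⟩ := hs.mem_Icc ω
      obtain ⟨hs'0, hs'1⟩ := hs'.mem_Icc ω
      constructor <;> linarith)

lemma integral_mul_sub_integral_mul (hm : IsMarg m) (hs : IsSeg s) (hs' : IsSeg s')
    (hvol : vol s = vol s') (c : ℝ) :
    ∫ ω, s ω * m ω ∂cubeMeasure n - ∫ ω, s' ω * m ω ∂cubeMeasure n =
      ∫ ω, (s ω - s' ω) * (m ω - c) ∂cubeMeasure n := by
  have hsplit : ∀ ω, (s ω - s' ω) * (m ω - c) = (s ω * m ω - s' ω * m ω) - c * (s ω - s' ω) :=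
    fun ω => by ring
  rw [vol, vol] at hvol
  simp_rw [hsplit]
  rw [integral_sub (f := fun ω => s ω * m ω - s' ω * m ω) (g := fun ω => c * (s ω - s' ω))
      ((hs.integrable_mul hm).sub (hs'.integrable_mul hm))
      ((hs.integrable.sub hs'.integrable).const_mul c),
    integral_sub (hs.integrable_mul hm) (hs'.integrable_mul hm), integral_const_mul,
    integral_sub hs.integrable hs'.integrable, hvol, sub_self, mul_zero, sub_zero]

def IsSuperlevelSelection (m : (Fin n → ℝ) → ℝ) (c : ℝ) (s : (Fin n → ℝ) → ℝ) : Prop :=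
  ∀ᵐ ω ∂cubeMeasure n, (m ω < c → s ω = 0) ∧ (c < m ω → s ω = 1)

lemma Smv_iff (hm : IsMarg m) (hs : IsSeg s) :
    Smv m v s ↔ vol s = v ∧ IsSuperlevelSelection m (1 - Finv m v) s := by
  rw [Smv, setIntegral_eq_zero_iff_ae_imp (measurableSet_lt hm.1 measurable_const)
      (fun ω => (hs.mem_Icc ω).1) hs.integrable,
    setIntegral_eq_zero_iff_ae_imp (measurableSet_lt measurable_const hm.1)
      (fun ω => sub_nonneg.2 (hs.mem_Icc ω).2) hs.one_sub.integrable, IsSuperlevelSelection,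
    ← eventually_and]
  simp only [mem_ofPred_eq, sub_eq_zero, eq_comm (a := (1:ℝ)), true_and, hs]

namespace IsSuperlevelSelection

lemma sub_mul_sub_nonneg (h : IsSuperlevelSelection m c s) (hs' : IsSeg s') :
    ∀ᵐ ω ∂cubeMeasure n, 0 ≤ (s ω - s' ω) * (m ω - c) := by
  filter_upwards [h] with ω ⟨hlt, hgt⟩
  rcases lt_trichotomy (m ω) c with hmc | hmc | hmc
  · rw [hlt hmc]
    exact mul_nonneg_of_nonpos_of_nonpos (by linarith [(hs'.mem_Icc ω).1]) (by linarith)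
  · simp [hmc]
  · rw [hgt hmc]
    exact mul_nonneg (by linarith [(hs'.mem_Icc ω).2]) (by linarith)

lemma integral_mul_le (h : IsSuperlevelSelection m c s) (hm : IsMarg m) (hs : IsSeg s)
    (hs' : IsSeg s') (hvol : vol s' = vol s) :
    ∫ ω, s' ω * m ω ∂cubeMeasure n ≤ ∫ ω, s ω * m ω ∂cubeMeasure n := by
  have := integral_mul_sub_integral_mul hm hs hs' hvol.symm c
  linarith [integral_nonneg_of_ae (h.sub_mul_sub_nonneg hs')]

/-- Equality in `integral_mul_le` forces `s` to agree with `s₀` a.e. off `{m = c}`. -/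
lemma of_integral_mul_le {s₀ : (Fin n → ℝ) → ℝ} (h₀ : IsSuperlevelSelection m c s₀)
    (hm : IsMarg m) (hs₀ : IsSeg s₀) (hs : IsSeg s) (hvol : vol s = vol s₀)
    (hle : ∫ ω, s₀ ω * m ω ∂cubeMeasure n ≤ ∫ ω, s ω * m ω ∂cubeMeasure n) :
    IsSuperlevelSelection m c s := by
  have hzero : (fun ω => (s₀ ω - s ω) * (m ω - c)) =ᵐ[cubeMeasure n] 0 := by
    rw [← integral_eq_zero_iff_of_nonneg_ae (h₀.sub_mul_sub_nonneg hs)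
      (hs₀.integrable_sub_mul_sub hs hm c)]
    have := integral_mul_sub_integral_mul hm hs₀ hs hvol.symm c
    linarith [integral_nonneg_of_ae (h₀.sub_mul_sub_nonneg hs)]
  filter_upwards [h₀, hzero] with ω ⟨hlt, hgt⟩ hω
  rw [Pi.zero_apply, mul_eq_zero, sub_eq_zero, sub_eq_zero] at hω
  refine ⟨fun hmc => ?_, fun hmc => ?_⟩
  · rw [← hlt hmc]; exact (hω.resolve_right hmc.ne).symm
  · rw [← hgt hmc]; exact (hω.resolve_right hmc.ne').symm

end IsSuperlevelSelection

lemma exists_isSuperlevelSelection (hm : IsMarg m) (hs : IsSeg s)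
    (hlo : (cubeMeasure n).real {ω | c < m ω} ≤ vol s)
    (hhi : vol s ≤ (cubeMeasure n).real {ω | c ≤ m ω}) :
    ∃ s₀, IsSeg s₀ ∧ vol s₀ = vol s ∧ IsSuperlevelSelection m c s₀ := by
  rw [hs.vol_eq] at hlo hhi ⊢
  obtain ⟨B, hB, hSB, hBT, hBμ⟩ := exists_measurableSet_between_measureReal_eq
    (measurableSet_lt measurable_const hm.1) (measurableSet_le measurable_const hm.1)
    (fun ω (hω : c < m ω) => hω.le) hlo hhi
  refine ⟨B.indicator 1, ⟨measurable_one.indicator hB, fun ω => ?_⟩, ?_,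
    Eventually.of_forall fun ω => ⟨fun hmc => ?_, fun hmc => ?_⟩⟩
  · by_cases hω : ω ∈ B <;> simp [hω]
  · rw [vol, integral_indicator_one hB, hBμ]
  · exact indicator_of_notMem (fun hωB => (hBT hωB).not_gt hmc) _
  · exact indicator_of_mem (hSB hmc) _

end Segmentation

theorem stmt3 {n : ℕ} {m : (Fin n → ℝ) → ℝ} (hm : IsMarg m)
    {v : ℝ} (hv : v ∈ Set.Icc (0:ℝ) 1)
    {s : (Fin n → ℝ) → ℝ} (hs : IsSeg s) (hvol : vol s = v) :
    Smv m v s ↔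
      ∀ s', IsSeg s' → vol s' = v →
        (∫ ω, s' ω * m ω ∂(cubeMeasure n)) ≤ ∫ ω, s ω * m ω ∂(cubeMeasure n) := by
  have hlo : (cubeMeasure n).real {ω | 1 - Finv m v < m ω} ≤ vol s := by
    simpa only [hvol, sub_lt_comm, measureReal_def, FcdfMinus] using FcdfMinus_Finv_le hm hv
  have hhi : vol s ≤ (cubeMeasure n).real {ω | 1 - Finv m v ≤ m ω} := by
    simpa only [hvol, sub_le_comm, measureReal_def, Fcdf] using le_Fcdf_Finv hm hv.2
  obtain ⟨s₀, hs₀, hvol₀, hsel₀⟩ := exists_isSuperlevelSelection hm hs hlo hhi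
  rw [Smv_iff hm hs]
  constructor
  · rintro ⟨-, hsel⟩ s' hs' hvol'
    exact hsel.integral_mul_le hm hs hs' (hvol'.trans hvol.symm)
  · intro hmax
    exact ⟨hvol, hsel₀.of_integral_mul_le hm hs₀ hs hvol₀.symm (hmax s₀ hs₀ (hvol₀.trans hvol))⟩
end
end

section
/- For any measurable m : Ω → [0,1], sup over segmentations s of A_m(s) equals sup over v ∈ [0,1] of a_m(v) := v + 1 - ‖m‖₁ - 2∫₀^v F_m⁻¹(u) du, where A_m(s) = ∫ (s·m + (1-s)(1-m)) dλ. -/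
open MeasureTheory Set

noncomputable section

/-- Accuracy. -/
def Accu {n : ℕ} (m s : (Fin n → ℝ) → ℝ) : ℝ :=
  ∫ ω, (s ω * m ω + (1 - s ω) * (1 - m ω)) ∂(cubeMeasure n)

/-- The function `a_m`. -/
def aFun {n : ℕ} (m : (Fin n → ℝ) → ℝ) (v : ℝ) : ℝ :=
  v + 1 - vol m - 2 * ∫ u in (0:ℝ)..v, Finv m u

/-! A segmentation can only pick, pointwise, `m` or `1 - m`, so the best accuracy is
`∫ max (m, 1 - m)`, attained by thresholding `m` at `1/2`. On the other side, the quantile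
function `F_m⁻¹` of `X = 1 - m` transports Lebesgue measure on `(0, 1]` to the law of `X`, so
`a_m(v) = E[X] + ∫₀^v (1 - 2 F_m⁻¹)`. The integrand is antitone, so the integral is maximal
when `v` is its sign change, where it equals `∫₀¹ (1 - 2 F_m⁻¹)⁺ = E[(1 - 2X)⁺]`, and
`E[X] + E[(1 - 2X)⁺] = ∫ max (m, 1 - m)`. -/

namespace ProbabilityTheory

def unitQuantile (μ : Measure ℝ) (v : ℝ) : ℝ :=
  sInf {t | t ∈ Icc (0:ℝ) 1 ∧ v ≤ cdf μ t}

variable {μ : Measure ℝ}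

lemma le_cdf_of_forall_lt {v x : ℝ} (h : ∀ y, x < y → v ≤ cdf μ y) : v ≤ cdf μ x :=
  ge_of_tendsto (((cdf μ).right_continuous x).mono Ioi_subset_Ici_self)
    (eventually_nhdsWithin_of_forall h)

variable [IsProbabilityMeasure μ]

lemma cdf_eq_zero_of_ae_nonneg (hμ : ∀ᵐ x ∂μ, 0 ≤ x) {t : ℝ} (ht : t < 0) : cdf μ t = 0 := by
  rw [cdf_eq_real, measureReal_def, measure_eq_zero_iff_ae_notMem.2]
  · rfl
  · filter_upwards [hμ] with x hx
    exact fun hxt => (lt_of_le_of_lt hxt ht).not_ge hx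

lemma cdf_eq_one_of_ae_le (hμ : ∀ᵐ x ∂μ, x ≤ 1) {t : ℝ} (ht : 1 ≤ t) : cdf μ t = 1 := by
  rw [cdf_eq_real, measureReal_def, (prob_compl_eq_zero_iff measurableSet_Iic).1]
  · rfl
  · refine measure_eq_zero_iff_ae_notMem.2 ?_
    filter_upwards [hμ] with x hx
    exact fun hxt => hxt (hx.trans ht)

variable (hμ : ∀ᵐ x ∂μ, x ∈ Icc (0:ℝ) 1)
include hμ

lemma unitQuantile_le_iff {v : ℝ} (hv : v ∈ Ioc 0 1) (t : ℝ) :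
    unitQuantile μ v ≤ t ↔ v ≤ cdf μ t := by
  have h0 : ∀ᵐ x ∂μ, 0 ≤ x := hμ.mono fun _ hx => hx.1
  have h1 : ∀ᵐ x ∂μ, x ≤ 1 := hμ.mono fun _ hx => hx.2
  have hbdd : BddBelow {t | t ∈ Icc (0:ℝ) 1 ∧ v ≤ cdf μ t} := ⟨0, fun _ hs => hs.1.1⟩
  have hone : 1 ∈ {t | t ∈ Icc (0:ℝ) 1 ∧ v ≤ cdf μ t} :=
    ⟨⟨zero_le_one, le_rfl⟩, (cdf_eq_one_of_ae_le h1 le_rfl).symm ▸ hv.2⟩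
  constructor
  · intro hQt
    refine le_trans (le_cdf_of_forall_lt fun y hy => ?_) ((cdf μ).mono hQt)
    obtain ⟨s, hs, hsy⟩ := exists_lt_of_csInf_lt ⟨1, hone⟩ hy
    exact hs.2.trans ((cdf μ).mono hsy.le)
  · intro hvt
    have ht0 : 0 ≤ t := by
      by_contra! ht
      rw [cdf_eq_zero_of_ae_nonneg h0 ht] at hvt
      exact hv.1.not_ge hvt
    rcases le_total t 1 with ht1 | ht1
    · exact csInf_le hbdd ⟨⟨ht0, ht1⟩, hvt⟩
    · exact (csInf_le hbdd hone).trans ht1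

-- Only on `Iic 1`: for `v > 1` the set is empty and `sInf ∅ = 0`.
lemma monotoneOn_unitQuantile : MonotoneOn (unitQuantile μ) (Iic 1) := by
  intro v _ w hw hvw
  refine csInf_le_csInf ⟨0, fun _ hs => hs.1.1⟩
    ⟨1, ⟨zero_le_one, le_rfl⟩, ?_⟩ fun t ht => ⟨ht.1, hvw.trans ht.2⟩
  rw [cdf_eq_one_of_ae_le (hμ.mono fun _ hx => hx.2) le_rfl]
  exact hw

lemma map_unitQuantile : (volume.restrict (Ioc (0:ℝ) 1)).map (unitQuantile μ) = μ := by
  have hQ : AEMeasurable (unitQuantile μ) (volume.restrict (Ioc (0:ℝ) 1)) :=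
    aemeasurable_restrict_of_monotoneOn measurableSet_Ioc
      ((monotoneOn_unitQuantile hμ).mono fun _ hv => hv.2)
  refine Measure.ext_of_Iic _ _ fun t => ?_
  have hpre : unitQuantile μ ⁻¹' Iic t ∩ Ioc 0 1 = Ioc 0 (cdf μ t) := by
    ext v
    simp only [mem_inter_iff, mem_preimage, mem_Iic, mem_Ioc]
    constructor
    · rintro ⟨hQ, hv⟩
      exact ⟨hv.1, (unitQuantile_le_iff hμ hv t).1 hQ⟩
    · rintro ⟨hv0, hvt⟩
      have hv : v ∈ Ioc 0 1 := ⟨hv0, hvt.trans (cdf_le_one μ t)⟩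
      exact ⟨(unitQuantile_le_iff hμ hv t).2 hvt, hv⟩
  rw [Measure.map_apply_of_aemeasurable hQ measurableSet_Iic,
    Measure.restrict_apply' measurableSet_Ioc, hpre, Real.volume_Ioc, sub_zero, ofReal_cdf]

lemma integral_comp_unitQuantile {g : ℝ → ℝ} (hg : Measurable g) :
    ∫ v in Ioc (0:ℝ) 1, g (unitQuantile μ v) = ∫ x, g x ∂μ := by
  conv_rhs => rw [← map_unitQuantile hμ]
  exact (integral_map (aemeasurable_restrict_of_monotoneOn measurableSet_Ioc
    ((monotoneOn_unitQuantile hμ).mono fun _ hv => hv.2)) hg.aestronglyMeasurable).symm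

end ProbabilityTheory

open ProbabilityTheory

namespace intervalIntegral

variable {h : ℝ → ℝ} {a b : ℝ}

lemma integral_le_integral_max_zero (hh : IntervalIntegrable h volume a b) {v : ℝ}
    (hv : v ∈ Icc a b) : ∫ u in a..v, h u ≤ ∫ u in a..b, max (h u) 0 := by
  have hh' : IntervalIntegrable (fun u => max (h u) 0) volume a b :=
    ⟨hh.1.pos_part, hh.2.pos_part⟩
  have hsub : ∀ {x y}, x ∈ Icc a b → y ∈ Icc a b →
      IntervalIntegrable (fun u => max (h u) 0) volume x y := fun hx hy =>
    hh'.mono_set (uIcc_subset_uIcc (Icc_subset_uIcc hx) (Icc_subset_uIcc hy))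
  have ha : a ∈ Icc a b := left_mem_Icc.2 (hv.1.trans hv.2)
  have hb : b ∈ Icc a b := right_mem_Icc.2 (hv.1.trans hv.2)
  calc ∫ u in a..v, h u ≤ ∫ u in a..v, max (h u) 0 :=
        integral_mono_on hv.1 (hh.mono_set (uIcc_subset_uIcc_left (Icc_subset_uIcc hv)))
          (hsub ha hv) fun u _ => le_max_left _ _
    _ ≤ ∫ u in a..b, max (h u) 0 := by
        rw [← integral_add_adjacent_intervals (hsub ha hv) (hsub hv hb)]
        exact le_add_of_nonneg_right (integral_nonneg hv.2 fun u _ => le_max_right _ _)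

end intervalIntegral

open intervalIntegral in
lemma AntitoneOn.exists_integral_eq_integral_max_zero {h : ℝ → ℝ} {a b : ℝ}
    (hh : AntitoneOn h (Icc a b)) (hab : a ≤ b) :
    ∃ v ∈ Icc a b, ∫ u in a..v, h u = ∫ u in a..b, max (h u) 0 := by
  set T := insert a {u | u ∈ Icc a b ∧ 0 < h u}
  have hT : BddAbove T := ⟨b, by rintro x (rfl | hx); exacts [hab, hx.1.2]⟩
  -- `v` is where `h` changes sign
  set v := sSup T
  have hv : v ∈ Icc a b := ⟨le_csSup hT (mem_insert a _),
    csSup_le (insert_nonempty _ _) (by rintro x (rfl | hx); exacts [hab, hx.1.2])⟩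
  have hpos : ∀ u ∈ Ioo a v, 0 ≤ h u := by
    rintro u ⟨hau, huv⟩
    obtain ⟨w, rfl | hw, huw⟩ := exists_lt_of_lt_csSup (insert_nonempty _ _) huv
    · exact absurd huw hau.not_gt
    · exact hw.2.le.trans (hh ⟨hau.le, huw.le.trans hw.1.2⟩ hw.1 huw.le)
  have hnonpos : ∀ u ∈ Ioo v b, h u ≤ 0 := fun u ⟨hvu, hub⟩ => not_lt.1 fun hu =>
    hvu.not_ge (le_csSup hT (mem_insert_of_mem a ⟨⟨hv.1.trans hvu.le, hub.le⟩, hu⟩))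
  have hmax : AntitoneOn (fun u => max (h u) 0) (Icc a b) :=
    fun x hx y hy hxy => max_le_max (hh hx hy hxy) le_rfl
  refine ⟨v, hv, ?_⟩
  rw [← integral_add_adjacent_intervals
      (hmax.mono (uIcc_subset_Icc (left_mem_Icc.2 hab) hv)).intervalIntegrable
      (hmax.mono (uIcc_subset_Icc hv (right_mem_Icc.2 hab))).intervalIntegrable,
    integral_congr_Ioo_of_le hv.2 fun u hu => max_eq_right (hnonpos u hu),
    intervalIntegral.integral_zero, add_zero]
  exact integral_congr_Ioo_of_le hv.1 fun u hu => (max_eq_left (hpos u hu)).symm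

instance (n : ℕ) : IsProbabilityMeasure (cubeMeasure n) :=
  ⟨by rw [cubeMeasure, Measure.restrict_apply_univ, volume_pi_pi]; simp⟩

lemma integrable_of_forall_mem_Icc {α : Type*} [MeasurableSpace α] {μ : Measure α}
    [IsFiniteMeasure μ] {f : α → ℝ} (hf : Measurable f) (h01 : ∀ x, f x ∈ Icc (0:ℝ) 1) :
    Integrable f μ :=
  .of_bound hf.aestronglyMeasurable 1 <| ae_of_all _ fun x =>
    abs_le.2 ⟨(neg_nonpos.2 zero_le_one).trans (h01 x).1, (h01 x).2⟩

lemma mul_add_one_sub_mul_one_sub_le_max {s p : ℝ} (hs : s = 0 ∨ s = 1) :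
    s * p + (1 - s) * (1 - p) ≤ max p (1 - p) := by
  rcases hs with rfl | rfl <;> simp

lemma ite_mul_add_one_sub_mul_one_sub_eq_max (p : ℝ) :
    (if 1 / 2 ≤ p then 1 else 0) * p + (1 - if 1 / 2 ≤ p then 1 else 0) * (1 - p) =
      max p (1 - p) := by
  split_ifs with hp
  · rw [max_eq_left (by linarith)]; ring
  · rw [max_eq_right (by linarith)]; ring

variable {n : ℕ} {m : (Fin n → ℝ) → ℝ}

lemma isGreatest_Accu (hm : IsMarg m) :
    IsGreatest {x | ∃ s, IsSeg s ∧ x = Accu m s} (∫ ω, max (m ω) (1 - m ω) ∂cubeMeasure n) := by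
  refine ⟨⟨fun ω => if 1 / 2 ≤ m ω then 1 else 0, ⟨?_, fun ω => ?_⟩, ?_⟩, ?_⟩
  · exact Measurable.ite (measurableSet_le measurable_const hm.1) measurable_const measurable_const
  · exact (ite_eq_or_eq _ _ _).symm
  · exact integral_congr_ae <| ae_of_all _ fun ω =>
      (ite_mul_add_one_sub_mul_one_sub_eq_max (m ω)).symm
  · rintro _ ⟨s, hs, rfl⟩
    refine integral_mono_of_nonneg (ae_of_all _ fun ω => ?_) ?_
      (ae_of_all _ fun ω => mul_add_one_sub_mul_one_sub_le_max (hs.2 ω))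
    · rcases hs.2 ω with h | h <;> simp [h, (hm.2 ω).1, (hm.2 ω).2]
    · exact integrable_of_forall_mem_Icc (hm.1.max (hm.1.const_sub 1)) fun ω =>
        ⟨(hm.2 ω).1.trans (le_max_left _ _), max_le (hm.2 ω).2 (by linarith [(hm.2 ω).1])⟩

def lawOneSub (m : (Fin n → ℝ) → ℝ) : Measure ℝ := (cubeMeasure n).map fun ω => 1 - m ω

lemma isProbabilityMeasure_lawOneSub (hm : Measurable m) : IsProbabilityMeasure (lawOneSub m) :=
  Measure.isProbabilityMeasure_map (hm.const_sub 1).aemeasurable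

lemma ae_mem_Icc_lawOneSub (hm : IsMarg m) : ∀ᵐ x ∂lawOneSub m, x ∈ Icc (0:ℝ) 1 :=
  (ae_map_iff (hm.1.const_sub 1).aemeasurable measurableSet_Icc).2 <|
    ae_of_all _ fun ω => ⟨sub_nonneg.2 (hm.2 ω).2, sub_le_self _ (hm.2 ω).1⟩

lemma Finv_eq_unitQuantile (hm : Measurable m) : Finv m = unitQuantile (lawOneSub m) := by
  have := isProbabilityMeasure_lawOneSub hm
  have hF : Fcdf m = cdf (lawOneSub m) := by
    ext t
    rw [cdf_eq_real, measureReal_def, lawOneSub,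
      Measure.map_apply (hm.const_sub 1) measurableSet_Iic]
    rfl
  ext v
  simp only [Finv, unitQuantile, hF]

lemma monotoneOn_Finv (hm : IsMarg m) : MonotoneOn (Finv m) (Iic 1) := by
  have := isProbabilityMeasure_lawOneSub hm.1
  rw [Finv_eq_unitQuantile hm.1]
  exact monotoneOn_unitQuantile (ae_mem_Icc_lawOneSub hm)

lemma integral_max_Finv (hm : IsMarg m) :
    ∫ u in (0:ℝ)..1, max (1 - 2 * Finv m u) 0 = ∫ ω, max (2 * m ω - 1) 0 ∂cubeMeasure n := by
  have := isProbabilityMeasure_lawOneSub hm.1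
  have hg : Measurable fun x : ℝ => max (1 - 2 * x) 0 := by fun_prop
  rw [intervalIntegral.integral_of_le zero_le_one, Finv_eq_unitQuantile hm.1,
    integral_comp_unitQuantile (ae_mem_Icc_lawOneSub hm) hg, lawOneSub,
    integral_map (hm.1.const_sub 1).aemeasurable hg.aestronglyMeasurable]
  congr with ω
  ring_nf

lemma integral_max_eq (hm : IsMarg m) :
    ∫ ω, max (m ω) (1 - m ω) ∂cubeMeasure n =
      1 - vol m + ∫ ω, max (2 * m ω - 1) 0 ∂cubeMeasure n := by
  have hmint : Integrable m (cubeMeasure n) := integrable_of_forall_mem_Icc hm.1 hm.2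
  have hpos : Integrable (fun ω => max (2 * m ω - 1) 0) (cubeMeasure n) :=
    ((hmint.const_mul 2).sub (integrable_const 1)).pos_part
  have hsplit : ∀ ω, max (m ω) (1 - m ω) = (1 - m ω) + max (2 * m ω - 1) 0 := fun ω => by
    rcases le_total (m ω) (1 - m ω) with h | h
    · rw [max_eq_right h, max_eq_right (by linarith)]; ring
    · rw [max_eq_left h, max_eq_left (by linarith)]; ring
  simp only [hsplit]
  have hone : Integrable (fun ω => 1 - m ω) (cubeMeasure n) := (integrable_const 1).sub hmint
  rw [integral_add hone hpos, integral_sub (integrable_const 1) hmint, vol]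
  simp

lemma aFun_eq (hm : IsMarg m) {v : ℝ} (hv : v ∈ Icc (0:ℝ) 1) :
    aFun m v = 1 - vol m + ∫ u in (0:ℝ)..v, (1 - 2 * Finv m u) := by
  have hint : IntervalIntegrable (Finv m) volume 0 v :=
    ((monotoneOn_Finv hm).mono fun u hu =>
      (uIcc_subset_Icc ⟨le_rfl, zero_le_one⟩ hv hu).2).intervalIntegrable
  rw [intervalIntegral.integral_sub intervalIntegrable_const (hint.const_mul 2),
    intervalIntegral.integral_const_mul, aFun]
  simp only [intervalIntegral.integral_const, smul_eq_mul, mul_one, sub_zero]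
  ring

lemma isGreatest_aFun (hm : IsMarg m) :
    IsGreatest {x | ∃ v ∈ Icc (0:ℝ) 1, x = aFun m v}
      (∫ ω, max (m ω) (1 - m ω) ∂cubeMeasure n) := by
  have hanti : AntitoneOn (fun u => 1 - 2 * Finv m u) (Icc 0 1) := fun u hu w hw huw => by
    linarith [monotoneOn_Finv hm hu.2 hw.2 huw]
  rw [integral_max_eq hm, ← integral_max_Finv hm]
  obtain ⟨v, hv, hv_max⟩ := hanti.exists_integral_eq_integral_max_zero zero_le_one
  refine ⟨⟨v, hv, by rw [aFun_eq hm hv, hv_max]⟩, ?_⟩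
  rintro _ ⟨v, hv, rfl⟩
  rw [aFun_eq hm hv]
  exact (add_le_add_iff_left _).2 (intervalIntegral.integral_le_integral_max_zero
    (hanti.mono (uIcc_of_le zero_le_one).subset).intervalIntegrable hv)

theorem stmt4 {n : ℕ} {m : (Fin n → ℝ) → ℝ} (hm : IsMarg m) :
    sSup {x : ℝ | ∃ s, IsSeg s ∧ x = Accu m s} =
      sSup {x : ℝ | ∃ v ∈ Set.Icc (0:ℝ) 1, x = aFun m v} := by
  rw [(isGreatest_Accu hm).csSup_eq, (isGreatest_aFun hm).csSup_eq]
end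
end

section
/- For every v ∈ [0,1] there exists a measurable m : Ω → [0,1] with ‖m‖₁ = v such that F_m(1/2-) = max{2v - 1, 0} and F_m(1/2) = min{2v, 1}; i.e., the volume bounds for optimal Accuracy segmentations are sharp. -/
open MeasureTheory Set

noncomputable section

/-! Take `m = 1` on `{ω₀ < 2v - 1}`, `m = 1/2` on `{2v - 1 ≤ ω₀ < 2v}` and `m = 0` elsewhere,
the average of two nested indicators. Its mass is `v`, and `{1 - m < 1/2}`, `{1 - m ≤ 1/2}` are the
half-spaces `{ω₀ < 2v - 1}`, `{ω₀ < 2v}`, whose cube measures are `2v - 1` and `2v` clipped to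
`[0, 1]`. -/

lemma volume_Iio_inter_Icc_zero_one (c : ℝ) :
    volume (Iio c ∩ Icc (0:ℝ) 1) = ENNReal.ofReal (min c 1) := by
  apply le_antisymm
  · calc volume (Iio c ∩ Icc (0:ℝ) 1) ≤ volume (Icc 0 (min c 1)) :=
          measure_mono fun x ⟨hxc, hx0, hx1⟩ => ⟨hx0, le_min hxc.le hx1⟩
      _ = ENNReal.ofReal (min c 1) := by rw [Real.volume_Icc, sub_zero]
  · calc ENNReal.ofReal (min c 1) = volume (Ico 0 (min c 1)) := by rw [Real.volume_Ico, sub_zero]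
      _ ≤ volume (Iio c ∩ Icc (0:ℝ) 1) :=
          measure_mono fun x ⟨hx0, hx⟩ =>
            ⟨hx.trans_le (min_le_left _ _), hx0, hx.le.trans (min_le_right _ _)⟩

lemma cubeMeasure_eq_pi (n : ℕ) :
    cubeMeasure n = Measure.pi fun _ : Fin n => volume.restrict (Icc (0:ℝ) 1) :=
  Measure.restrict_pi_pi _ _

instance : IsProbabilityMeasure (volume.restrict (Icc (0:ℝ) 1)) := ⟨by simp⟩

instance inst_s7 (n : ℕ) : IsProbabilityMeasure (cubeMeasure n) := by
  rw [cubeMeasure_eq_pi]; infer_instance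

lemma cubeMeasure_coord_lt {n : ℕ} (i : Fin n) (c : ℝ) :
    cubeMeasure n {ω | ω i < c} = ENNReal.ofReal (min c 1) := by
  rw [cubeMeasure_eq_pi, ← volume_Iio_inter_Icc_zero_one,
    ← Measure.restrict_apply measurableSet_Iio]
  exact (measurePreserving_eval _ i).measure_preimage measurableSet_Iio.nullMeasurableSet

section avgIndicator

variable {α : Type*}

def avgIndicator (A B : Set α) (ω : α) : ℝ := (A.indicator 1 ω + B.indicator 1 ω) / 2

lemma avgIndicator_mem_Icc (A B : Set α) (ω : α) : avgIndicator A B ω ∈ Icc (0:ℝ) 1 := by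
  unfold avgIndicator
  by_cases hA : ω ∈ A <;> by_cases hB : ω ∈ B <;> norm_num [hA, hB]

lemma measurable_avgIndicator [MeasurableSpace α] {A B : Set α} (hA : MeasurableSet A)
    (hB : MeasurableSet B) :
    Measurable (avgIndicator A B) :=
  ((measurable_one.indicator hA).add (measurable_one.indicator hB)).div_const 2

lemma setOf_one_sub_avgIndicator_lt_half {A B : Set α} (hAB : A ⊆ B) :
    {ω | 1 - avgIndicator A B ω < 1/2} = A := by
  ext ω
  unfold avgIndicator
  by_cases hA : ω ∈ A <;> by_cases hB : ω ∈ B <;> norm_num [hA, hB]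
  exact hB (hAB hA)

lemma setOf_one_sub_avgIndicator_le_half {A B : Set α} (hAB : A ⊆ B) :
    {ω | 1 - avgIndicator A B ω ≤ 1/2} = B := by
  ext ω
  unfold avgIndicator
  by_cases hA : ω ∈ A <;> by_cases hB : ω ∈ B <;> norm_num [hA, hB]
  exact hB (hAB hA)

lemma integral_avgIndicator [MeasurableSpace α] (μ : Measure α) [IsFiniteMeasure μ]
    {A B : Set α} (hA : MeasurableSet A) (hB : MeasurableSet B) :
    ∫ ω, avgIndicator A B ω ∂μ = (μ.real A + μ.real B) / 2 := by
  unfold avgIndicator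
  rw [integral_div,
    integral_add ((integrable_const 1).indicator hA) ((integrable_const 1).indicator hB),
    integral_indicator_one hA, integral_indicator_one hB]

end avgIndicator

theorem stmt7 {n : ℕ} (hn : 1 ≤ n) :
    ∀ v ∈ Set.Icc (0:ℝ) 1, ∃ m : (Fin n → ℝ) → ℝ,
      IsMarg m ∧ vol m = v ∧
      FcdfMinus m (1/2) = max (2 * v - 1) 0 ∧
      Fcdf m (1/2) = min (2 * v) 1 := by
  rintro v ⟨hv0, hv1⟩
  let i : Fin n := ⟨0, hn⟩
  set A : Set (Fin n → ℝ) := {ω | ω i < 2 * v - 1}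
  set B : Set (Fin n → ℝ) := {ω | ω i < 2 * v}
  have hAB : A ⊆ B := fun ω (hω : ω i < 2 * v - 1) => show ω i < 2 * v by linarith
  have hA : MeasurableSet A := measurableSet_lt (measurable_pi_apply i) measurable_const
  have hB : MeasurableSet B := measurableSet_lt (measurable_pi_apply i) measurable_const
  have hμA : (cubeMeasure n).real A = max (2 * v - 1) 0 := by
    rw [measureReal_def, cubeMeasure_coord_lt, min_eq_left (by linarith), ENNReal.toReal_ofReal']
  have hμB : (cubeMeasure n).real B = min (2 * v) 1 := by
    rw [measureReal_def, cubeMeasure_coord_lt, ENNReal.toReal_ofReal (by positivity)]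
  refine ⟨avgIndicator A B, ⟨measurable_avgIndicator hA hB, avgIndicator_mem_Icc A B⟩, ?_,
    by rw [FcdfMinus, setOf_one_sub_avgIndicator_lt_half hAB]; exact hμA,
    by rw [Fcdf, setOf_one_sub_avgIndicator_le_half hAB]; exact hμB⟩
  rw [vol, integral_avgIndicator _ hA hB, hμA, hμB]
  rcases le_total v (1/2) with hv | hv
  · rw [max_eq_right (by linarith), min_eq_left (by linarith)]; ring
  · rw [max_eq_left (by linarith), min_eq_right (by linarith)]; ring
end
end
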